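/- Let n ≥ 1, let p1, p2 : Fin n → ℕ be positive processing times, and suppose σ is a feasible sequence with p1(σ 0) ≠ p2(σ (n−1)). Then every feasible sequence τ satisfies p1(τ 0) = p1(σ 0) and p2(τ (n−1)) = p2(σ (n−1)); consequently all feasible sequences have the same makespan p1(σ 0) + Σ_i p2(i). -/

import Mathlib

/-!
Along a feasible sequence each job's `p2` equals the next job's `p1`, so the multiset of all
`p1`-values plus the last `p2` equals the multiset of all `p2`-values plus the first `p1`. The
multisets of `p1`- and `p2`-values do not depend on the sequence; comparing the identities for
`σ` and `τ` gives `{p1 (σ 0), p2 (τ last)} = {p1 (τ 0), p2 (σ last)}`, and since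
`p1 (σ 0) ≠ p2 (σ last)` the endpoints must match.
-/

/-- A sequence `σ` for a two-machine no-idle/no-wait flow shop instance is feasible
if `p2 (σ j) = p1 (σ (j+1))` for every position `j` with `j+1 < n`. -/
def FeasibleSeq (n : ℕ) (p1 p2 : Fin n → ℕ) (σ : Fin n ≃ Fin n) : Prop :=
  ∀ j : Fin n, ∀ h : (j : ℕ) + 1 < n, p2 (σ j) = p1 (σ ⟨(j : ℕ) + 1, h⟩)

theorem List.ofFn_append_last_eq_cons_ofFn {α : Type*} {m : ℕ} {a b : Fin (m + 1) → α}
    (h : ∀ j : Fin m, b j.castSucc = a j.succ) :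
    List.ofFn a ++ [b (Fin.last m)] = a 0 :: List.ofFn b := by
  rw [List.ofFn_succ, List.ofFn_succ' b, List.concat_eq_append, List.cons_append]
  simp only [h]

theorem Multiset.eq_and_eq_of_cons_eq_cons_of_cons_eq_cons {α : Type*} {P Q : Multiset α}
    {a b c d : α} (hab : b ::ₘ P = a ::ₘ Q) (hcd : d ::ₘ P = c ::ₘ Q) (hne : a ≠ b) :
    a = c ∧ d = b := by
  have hpair : ({a, d} : Multiset α) = {c, b} := by
    refine add_right_cancel (b := Q) ?_
    calc ({a, d} : Multiset α) + Q = d ::ₘ a ::ₘ Q := by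
          simp [Multiset.insert_eq_cons, Multiset.cons_swap]
      _ = b ::ₘ c ::ₘ Q := by rw [← hab, ← hcd, Multiset.cons_swap]
      _ = {c, b} + Q := by simp [Multiset.insert_eq_cons, Multiset.cons_swap]
  have hac : a = c := by
    have ha : a ∈ ({c, b} : Multiset α) := hpair ▸ Multiset.mem_cons_self a _
    simpa [hne] using ha
  subst hac
  exact ⟨rfl, Multiset.singleton_inj.mp (Multiset.cons_inj_right a |>.mp hpair)⟩

theorem FeasibleSeq.cons_last_map_eq_cons_first_map {n : ℕ} (hn : 0 < n) {p1 p2 : Fin n → ℕ}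
    {τ : Fin n ≃ Fin n} (hτ : FeasibleSeq n p1 p2 τ) :
    p2 (τ ⟨n - 1, Nat.sub_lt hn Nat.one_pos⟩) ::ₘ Finset.univ.val.map p1 =
      p1 (τ ⟨0, hn⟩) ::ₘ Finset.univ.val.map p2 := by
  obtain ⟨m, rfl⟩ := Nat.exists_eq_add_of_le' hn
  have hchain : ∀ j : Fin m, (p2 ∘ τ) j.castSucc = (p1 ∘ τ) j.succ :=
    fun j => hτ j.castSucc j.succ.isLt
  rw [← Multiset.map_univ_val_equiv τ, Multiset.map_map, Multiset.map_map, Fin.univ_val_map,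
    Fin.univ_val_map, Multiset.cons_coe, Multiset.cons_coe, Multiset.coe_eq_coe]
  exact (List.perm_append_singleton _ _).symm.trans
    (.of_eq (List.ofFn_append_last_eq_cons_ofFn hchain))

/-- if some feasible sequence `σ` has `p1 (σ 0) ≠ p2 (σ (n-1))`, then
every feasible sequence `τ` has the same first processing time on M1, the same last
processing time on M2, and hence the same makespan `p1 (σ 0) + Σ_i p2 i`. -/
theorem stmt_4 (n : ℕ) (hn : 1 ≤ n) (p1 p2 : Fin n → ℕ)
    (σ : Fin n ≃ Fin n) (hσ : FeasibleSeq n p1 p2 σ)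
    (hne : p1 (σ ⟨0, by omega⟩) ≠ p2 (σ ⟨n - 1, by omega⟩)) :
    ∀ τ : Fin n ≃ Fin n, FeasibleSeq n p1 p2 τ →
      p1 (τ ⟨0, by omega⟩) = p1 (σ ⟨0, by omega⟩) ∧
      p2 (τ ⟨n - 1, by omega⟩) = p2 (σ ⟨n - 1, by omega⟩) ∧
      p1 (τ ⟨0, by omega⟩) + ∑ i, p2 i = p1 (σ ⟨0, by omega⟩) + ∑ i, p2 i := by
  intro τ hτ
  obtain ⟨hfirst, hlast⟩ := Multiset.eq_and_eq_of_cons_eq_cons_of_cons_eq_cons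
    (hσ.cons_last_map_eq_cons_first_map hn) (hτ.cons_last_map_eq_cons_first_map hn) hne
  exact ⟨hfirst.symm, hlast, by rw [hfirst]⟩
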